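/- arXiv:1408.1045 — 2 statements merged into one kernel-verified Lean document; each statement's English description precedes it below -/
import Mathlib

section
/- Two nearest-neighbour discrete loops γ and γ' on ℤ² visit a common vertex if and only if their linear interpolations Φ_N γ and Φ_N γ' (for any fixed N ≥ 1) have intersecting images in ℂ. -/
/-!
A common point of the two interpolated loops is, after scaling by `N`, a point `x` of a closed
unit lattice edge `[z j, z (j+1)]` of the first loop and of a half-open edge `[z' k, z' (k+1))` of
the second, so the lattice point `z' k` lies at distance `< 1` from `x`. Coordinatewise, an integer
at distance `< 1` from a point between two integers at most `1` apart is one of them; as unit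
lattice edges are axis-parallel, `z' k` is then an endpoint of `[z j, z (j+1)]`.
-/

noncomputable def PhiN (N : ℕ) (z : ℕ → ℂ) (t : ℝ) : ℂ :=
  (((1 : ℝ) - (2 * (N : ℝ) ^ 2 * t - ⌊2 * (N : ℝ) ^ 2 * t⌋₊) : ℝ) •
      z ⌊2 * (N : ℝ) ^ 2 * t⌋₊ +
    ((2 * (N : ℝ) ^ 2 * t - ⌊2 * (N : ℝ) ^ 2 * t⌋₊ : ℝ) • z (⌊2 * (N : ℝ) ^ 2 * t⌋₊ + 1))) / N

open Set Complex

def IsLatticePoint (w : ℂ) : Prop := ∃ a b : ℤ, w = a + b * I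

lemma eq_or_eq_of_mem_uIcc_of_abs_sub_lt_one {a b c : ℤ} {x : ℝ} (hab : |b - a| ≤ 1)
    (hx : x ∈ uIcc (a : ℝ) b) (hxc : |x - c| < 1) : c = a ∨ c = b := by
  obtain ⟨hlo, hhi⟩ := hx
  rw [abs_lt] at hxc
  have hc_lo : min a b < c + 1 := by
    have : ((min a b : ℤ) : ℝ) < c + 1 := by push_cast; linarith
    exact_mod_cast this
  have hc_hi : c < max a b + 1 := by
    have : (c : ℝ) < ((max a b : ℤ) : ℝ) + 1 := by push_cast; linarith
    exact_mod_cast this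
  rw [abs_le] at hab
  omega

lemma IsLatticePoint.re_eq_or_im_eq_of_dist_eq_one {a b : ℂ} (ha : IsLatticePoint a)
    (hb : IsLatticePoint b) (hab : dist a b = 1) : a.re = b.re ∨ a.im = b.im := by
  obtain ⟨a1, a2, rfl⟩ := ha
  obtain ⟨b1, b2, rfl⟩ := hb
  rw [Complex.dist_eq_re_im, Real.sqrt_eq_one] at hab
  simp only [add_re, add_im, mul_I_re, mul_I_im, intCast_re, intCast_im, neg_zero, add_zero,
    zero_add, Int.cast_inj] at hab ⊢
  have hsq : (a1 - b1) ^ 2 + (a2 - b2) ^ 2 = 1 := by exact_mod_cast hab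
  by_contra! h
  nlinarith [sq_pos_of_ne_zero (sub_ne_zero.2 h.1), sq_pos_of_ne_zero (sub_ne_zero.2 h.2)]

lemma IsLatticePoint.eq_or_eq_of_mem_segment_of_dist_lt_one {a b c x : ℂ}
    (ha : IsLatticePoint a) (hb : IsLatticePoint b) (hc : IsLatticePoint c)
    (hab : dist a b = 1) (hx : x ∈ segment ℝ a b) (hxc : dist x c < 1) : c = a ∨ c = b := by
  have haxis := ha.re_eq_or_im_eq_of_dist_eq_one hb hab
  rw [dist_comm, dist_eq_norm] at hab
  rw [dist_eq_norm] at hxc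
  have hre : x.re ∈ uIcc a.re b.re := by
    have := mem_image_of_mem reLm.toAffineMap hx
    rwa [image_segment, segment_eq_uIcc] at this
  have him : x.im ∈ uIcc a.im b.im := by
    have := mem_image_of_mem imLm.toAffineMap hx
    rwa [image_segment, segment_eq_uIcc] at this
  have hre_ab := (abs_re_le_norm (b - a)).trans hab.le
  have him_ab := (abs_im_le_norm (b - a)).trans hab.le
  have hre_xc := (abs_re_le_norm (x - c)).trans_lt hxc
  have him_xc := (abs_im_le_norm (x - c)).trans_lt hxc
  obtain ⟨a1, a2, rfl⟩ := ha
  obtain ⟨b1, b2, rfl⟩ := hb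
  obtain ⟨c1, c2, rfl⟩ := hc
  rw [Complex.ext_iff, Complex.ext_iff]
  simp only [sub_re, sub_im, add_re, add_im, mul_I_re, mul_I_im, intCast_re, intCast_im, neg_zero,
    add_zero, zero_add, Int.cast_inj] at *
  have hc1 := eq_or_eq_of_mem_uIcc_of_abs_sub_lt_one (by exact_mod_cast hre_ab) hre hre_xc
  have hc2 := eq_or_eq_of_mem_uIcc_of_abs_sub_lt_one (by exact_mod_cast him_ab) him him_xc
  omega

lemma IsLatticePoint.eq_or_eq_of_lineMap_eq {a b c d : ℂ} (ha : IsLatticePoint a)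
    (hb : IsLatticePoint b) (hc : IsLatticePoint c) (hab : dist a b = 1) (hcd : dist c d ≤ 1)
    {f g : ℝ} (hf : f ∈ Icc 0 1) (hg : g ∈ Ico 0 1)
    (h : AffineMap.lineMap a b f = AffineMap.lineMap c d g) : c = a ∨ c = b := by
  refine ha.eq_or_eq_of_mem_segment_of_dist_lt_one hb hc hab (lineMap_mem_segment ℝ a b hf) ?_
  calc dist (AffineMap.lineMap a b f) c = ‖g‖ * dist c d := by rw [h, dist_lineMap_left]
    _ ≤ g * 1 := by rw [Real.norm_of_nonneg hg.1]; gcongr; exact hg.1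
    _ < 1 := by linarith [hg.2]

lemma PhiN_natCast_div {N : ℕ} (hN : N ≠ 0) (z : ℕ → ℂ) (j : ℕ) :
    PhiN N z (j / (2 * N ^ 2)) = z j / N := by
  have hj : 2 * (N : ℝ) ^ 2 * (j / (2 * N ^ 2)) = j := by field_simp
  simp [PhiN, hj]

lemma exists_PhiN_eq_lineMap (N : ℕ) (z : ℕ → ℂ) {t : ℝ} (ht : 0 ≤ t) :
    ∃ j : ℕ, ∃ f ∈ Ico (0 : ℝ) 1, PhiN N z t = AffineMap.lineMap (z j) (z (j + 1)) f / N := by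
  set x := 2 * (N : ℝ) ^ 2 * t
  refine ⟨⌊x⌋₊, x - ⌊x⌋₊, ⟨sub_nonneg.2 (Nat.floor_le (by positivity)),
    by linarith [Nat.lt_floor_add_one x]⟩, by rw [PhiN, AffineMap.lineMap_apply_module]⟩

/-- Two nearest-neighbour discrete loops on `ℤ²` visit a common vertex if and only if their
linear interpolations `Φ_N` have intersecting images. -/
theorem stmt6 (N : ℕ) (hN : 1 ≤ N) (n m : ℕ) (hn : 2 ≤ n) (hm : 2 ≤ m)
    (z z' : ℕ → ℂ)
    (hlat : ∀ j, ∃ a b : ℤ, z j = (a : ℂ) + (b : ℂ) * Complex.I)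
    (hlat' : ∀ j, ∃ a b : ℤ, z' j = (a : ℂ) + (b : ℂ) * Complex.I)
    (hstep : ∀ j, ‖z (j + 1) - z j‖ = 1)
    (hstep' : ∀ j, ‖z' (j + 1) - z' j‖ = 1)
    (hper : ∀ j, z (j + n) = z j) (hper' : ∀ j, z' (j + m) = z' j) :
    (∃ j < n, ∃ k < m, z j = z' k) ↔
      ∃ s ∈ Set.Icc (0 : ℝ) ((n : ℝ) / (2 * (N : ℝ) ^ 2)),
        ∃ u ∈ Set.Icc (0 : ℝ) ((m : ℝ) / (2 * (N : ℝ) ^ 2)),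
          PhiN N z s = PhiN N z' u := by
  have hN0 : N ≠ 0 := by omega
  constructor
  · rintro ⟨j, hj, k, hk, h⟩
    refine ⟨j / (2 * N ^ 2), ⟨by positivity, by gcongr⟩,
      k / (2 * N ^ 2), ⟨by positivity, by gcongr⟩, ?_⟩
    rw [PhiN_natCast_div hN0, PhiN_natCast_div hN0, h]
  · rintro ⟨s, ⟨hs, -⟩, u, ⟨hu, -⟩, h⟩
    obtain ⟨j, f, hf, hzs⟩ := exists_PhiN_eq_lineMap N z hs
    obtain ⟨k, g, hg, hzu⟩ := exists_PhiN_eq_lineMap N z' hu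
    rw [hzs, hzu, div_left_inj' (by exact_mod_cast hN0)] at h
    have hk : z' k = z j ∨ z' k = z (j + 1) :=
      IsLatticePoint.eq_or_eq_of_lineMap_eq (hlat j) (hlat (j + 1)) (hlat' k)
        (by rw [dist_comm, dist_eq_norm, hstep]) (by rw [dist_comm, dist_eq_norm, hstep'])
        (Ico_subset_Icc_self hf) hg h
    obtain ⟨p, hp⟩ : ∃ p, z p = z' k := hk.elim (fun h ↦ ⟨j, h.symm⟩) (fun h ↦ ⟨j + 1, h.symm⟩)
    refine ⟨p % n, Nat.mod_lt _ (by omega), k % m, Nat.mod_lt _ (by omega), ?_⟩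
    rw [Function.Periodic.map_mod_nat hper, Function.Periodic.map_mod_nat hper', hp]
end

section
/- A closed continuous loop in ℂ whose winding number around a point w is nonzero separates w from infinity: every continuous path from w to points of arbitrarily large modulus must intersect the image of the loop. -/
/-!
Suppose `η` misses the loop. Sample `γ` at the points `k / n`, with `n` so large that
consecutive samples are closer to each other than the loop is to the path `η`, and that `θ`
moves by less than `π` between them. For every `s` the sum of the principal arguments of
`(γ ((k + 1) / n) - η s) / (γ (k / n) - η s)` is continuous in `s` and lies in `2πℤ` because
the polygon is closed, so it does not depend on `s`. For `s = 0` the sum telescopes to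
`θ 1 - θ 0`; for `s = 1` the whole loop lies in an open half-plane seen from `η 1`, so it
telescopes to `0`.
-/

open Complex Set Filter Real

namespace Complex

theorem arg_div_eq_sub_of_lift {z w : ℂ} {a b : ℝ} (hz : z ≠ 0) (hw : w ≠ 0)
    (ha : z = ‖z‖ * exp (a * I)) (hb : w = ‖w‖ * exp (b * I))
    (hab : b - a ∈ Ioc (-π) π) : arg (w / z) = b - a := by
  have hquot : w / z = ((‖w‖ / ‖z‖ : ℝ) : ℂ) * exp ((b - a : ℝ) * I) := by
    calc w / z = ‖w‖ * exp (b * I) / (‖z‖ * exp (a * I)) := by rw [← ha, ← hb]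
      _ = _ := by
        have : (‖z‖ : ℂ) ≠ 0 := by exact_mod_cast norm_ne_zero_iff.2 hz
        push_cast
        rw [sub_mul, exp_sub]
        field_simp
  rw [hquot, arg_real_mul _ (div_pos (norm_pos_iff.2 hw) (norm_pos_iff.2 hz)), exp_mul_I]
  exact_mod_cast arg_cos_add_sin_mul_I hab

theorem arg_div_eq_arg_sub_arg_of_re_pos {z w : ℂ} (hz : 0 < z.re) (hw : 0 < w.re) :
    arg (w / z) = arg w - arg z := by
  have hz' := abs_lt.1 (abs_arg_lt_pi_div_two_iff.2 (.inl hz))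
  have hw' := abs_lt.1 (abs_arg_lt_pi_div_two_iff.2 (.inl hw))
  refine arg_div_eq_sub_of_lift (ne_of_apply_ne re hz.ne') (ne_of_apply_ne re hw.ne')
    (norm_mul_exp_arg_mul_I z).symm (norm_mul_exp_arg_mul_I w).symm ⟨?_, ?_⟩ <;> linarith

theorem re_div_pos_of_norm_sub_lt {z w : ℂ} (h : ‖w - z‖ < ‖z‖) : 0 < (w / z).re := by
  have hz : z ≠ 0 := norm_pos_iff.1 ((norm_nonneg _).trans_lt h)
  have hsmall : ‖w / z - 1‖ < 1 := by
    rwa [div_sub_one hz, norm_div, div_lt_one (norm_pos_iff.2 hz)]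
  have := (abs_re_le_norm (w / z - 1)).trans_lt hsmall
  rw [sub_re, one_re] at this
  linarith [(abs_lt.1 this).1]

end Complex

theorem IsPreconnected.eq_of_coe_angle_eq_zero {α : Type*} [TopologicalSpace α]
    {S : Set α} (hS : IsPreconnected S) {f : α → ℝ} (hf : ContinuousOn f S)
    (h : ∀ s ∈ S, (f s : Real.Angle) = 0) {x y : α} (hx : x ∈ S) (hy : y ∈ S) : f x = f y :=
  hS.constant_of_mapsTo (T := (AddSubgroup.zmultiples (2 * π) : Set ℝ))
    (isDiscrete_iff_discreteTopology.2
      (inferInstanceAs (DiscreteTopology (AddSubgroup.zmultiples (2 * π))))) hf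
    (fun s hs => AddSubgroup.mem_zmultiples_iff.2 (Real.Angle.coe_eq_zero_iff.1 (h s hs)))
    hx hy

theorem exists_pos_forall_le_norm_sub {X Y E : Type*} [TopologicalSpace X] [TopologicalSpace Y]
    [NormedAddCommGroup E] {A : Set X} {B : Set Y} {γ : X → E} {η : Y → E} (hA : IsCompact A)
    (hB : IsCompact B) (hγ : ContinuousOn γ A) (hη : ContinuousOn η B)
    (hne : ∀ u ∈ A, ∀ s ∈ B, γ u ≠ η s) : ∃ m > 0, ∀ u ∈ A, ∀ s ∈ B, m ≤ ‖γ u - η s‖ := by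
  have hdisj : Disjoint (γ '' A) (η '' B) := by
    rw [Set.disjoint_left]
    rintro _ ⟨u, hu, rfl⟩ ⟨s, hs, hus⟩
    exact hne u hu s hs hus.symm
  obtain ⟨r, hr, hlt⟩ := Metric.exists_pos_forall_lt_edist (hA.image_of_continuousOn hγ)
    (hB.image_of_continuousOn hη).isClosed hdisj
  refine ⟨r, hr, fun u hu s hs => ?_⟩
  have := hlt _ (mem_image_of_mem γ hu) _ (mem_image_of_mem η hs)
  rw [edist_nndist, ENNReal.coe_lt_coe, ← NNReal.coe_lt_coe, coe_nndist, dist_eq_norm] at this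
  exact this.le

theorem ContinuousOn.eventually_forall_dist_nat_div_lt {E : Type*} [PseudoMetricSpace E]
    {f : ℝ → E} (hf : ContinuousOn f (Icc 0 1)) {ε : ℝ} (hε : 0 < ε) :
    ∀ᶠ n : ℕ in atTop, ∀ k < n, dist (f ((k + 1 : ℕ) / n)) (f (k / n)) < ε := by
  obtain ⟨δ, hδ, hf⟩ := Metric.uniformContinuousOn_iff.1
    (isCompact_Icc.uniformContinuousOn_of_continuous hf) ε hε
  filter_upwards [tendsto_one_div_atTop_nhds_zero_nat.eventually (gt_mem_nhds hδ),
    eventually_gt_atTop 0] with n hn hn0 k hk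
  have hmem : ∀ j ≤ n, (j / n : ℝ) ∈ Icc 0 1 := fun j hj =>
    ⟨by positivity, div_le_one_of_le₀ (by exact_mod_cast hj) n.cast_nonneg⟩
  refine hf _ (hmem _ hk) _ (hmem _ hk.le) ?_
  rw [Real.dist_eq, Nat.cast_succ, add_div, add_sub_cancel_left, abs_of_pos (by positivity)]
  simpa using hn

section WindingAngle

variable {p : ℕ → ℂ} {n : ℕ} {c : ℂ}

variable (p n c) in
noncomputable def windingAngle : ℝ := ∑ k ∈ Finset.range n, arg ((p (k + 1) - c) / (p k - c))

theorem coe_windingAngle (hp : ∀ k ≤ n, p k ≠ c) :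
    (windingAngle p n c : Real.Angle) = arg (p n - c) - arg (p 0 - c) := by
  rw [windingAngle, ← Real.Angle.coe_coeHom, map_sum, Real.Angle.coe_coeHom,
    ← Finset.sum_range_sub (fun k => (arg (p k - c) : Real.Angle))]
  refine Finset.sum_congr rfl fun k hk => ?_
  rw [Finset.mem_range] at hk
  exact arg_div_coe_angle (sub_ne_zero.2 (hp _ hk)) (sub_ne_zero.2 (hp _ hk.le))

theorem windingAngle_eq_sub_of_lift (hp : ∀ k ≤ n, p k ≠ c) {φ : ℕ → ℝ}
    (hφ : ∀ k ≤ n, p k - c = ‖p k - c‖ * exp (φ k * I))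
    (hstep : ∀ k < n, |φ (k + 1) - φ k| < π) : windingAngle p n c = φ n - φ 0 := by
  rw [windingAngle, ← Finset.sum_range_sub]
  refine Finset.sum_congr rfl fun k hk => ?_
  rw [Finset.mem_range] at hk
  obtain ⟨hlo, hhi⟩ := abs_lt.1 (hstep k hk)
  exact arg_div_eq_sub_of_lift (sub_ne_zero.2 (hp _ hk.le)) (sub_ne_zero.2 (hp _ hk))
    (hφ _ hk.le) (hφ _ hk) ⟨hlo, hhi.le⟩

theorem windingAngle_eq_zero_of_norm_lt (hclosed : p n = p 0) (hp : ∀ k ≤ n, ‖p k‖ < ‖c‖) :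
    windingAngle p n c = 0 := by
  have hc : -c ≠ 0 :=
    neg_ne_zero.2 (norm_pos_iff.1 ((norm_nonneg _).trans_lt (hp 0 n.zero_le)))
  set q : ℕ → ℂ := fun k => (p k - c) / -c
  have hq : ∀ k ≤ n, 0 < (q k).re := fun k hk =>
    re_div_pos_of_norm_sub_lt
      (by simpa only [sub_neg_eq_add, sub_add_cancel, norm_neg] using hp k hk)
  calc windingAngle p n c = ∑ k ∈ Finset.range n, (arg (q (k + 1)) - arg (q k)) := by
        refine Finset.sum_congr rfl fun k hk => ?_
        rw [Finset.mem_range] at hk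
        rw [← arg_div_eq_arg_sub_arg_of_re_pos (hq k hk.le) (hq (k + 1) hk),
          div_div_div_cancel_right₀ hc]
    _ = 0 := by
        rw [Finset.sum_range_sub (fun k => arg (q k)), show q n = q 0 by simp only [q, hclosed],
          sub_self]

theorem continuousOn_windingAngle {α : Type*} [TopologicalSpace α] {S : Set α} {η : α → ℂ}
    (hη : ContinuousOn η S) (hstep : ∀ s ∈ S, ∀ k < n, ‖p (k + 1) - p k‖ < ‖p k - η s‖) :
    ContinuousOn (fun s => windingAngle p n (η s)) S := by
  refine continuousOn_finsetSum _ fun k hk => ?_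
  rw [Finset.mem_range] at hk
  have hne : ∀ s ∈ S, p k - η s ≠ 0 := fun s hs =>
    norm_pos_iff.1 ((norm_nonneg _).trans_lt (hstep s hs k hk))
  have hre : ∀ s ∈ S, 0 < ((p (k + 1) - η s) / (p k - η s)).re := fun s hs =>
    re_div_pos_of_norm_sub_lt (by rw [sub_sub_sub_cancel_right]; exact hstep s hs k hk)
  exact fun s hs =>
    (continuousAt_arg (mem_slitPlane_iff.2 (.inl (hre s hs)))).comp_continuousWithinAt
    (f := fun s => (p (k + 1) - η s) / (p k - η s))
    ((continuousOn_const.sub hη).div (continuousOn_const.sub hη) hne s hs)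

end WindingAngle

theorem stmt19_general (γ : ℝ → ℂ) (w : ℂ)
    (hγ : ContinuousOn γ (Set.Icc 0 1)) (hloop : γ 0 = γ 1)
    (θ : ℝ → ℝ) (hθ : ContinuousOn θ (Set.Icc 0 1))
    (hlift : ∀ s ∈ Set.Icc (0 : ℝ) 1,
      γ s - w = (‖γ s - w‖ : ℂ) * Complex.exp ((θ s : ℂ) * Complex.I))
    (hwind : θ 1 ≠ θ 0)
    (η : ℝ → ℂ) (hη : ContinuousOn η (Set.Icc 0 1)) (hη0 : η 0 = w)
    (hη1 : ∀ s ∈ Set.Icc (0 : ℝ) 1, ‖γ s‖ < ‖η 1‖) :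
    ∃ s ∈ Set.Icc (0 : ℝ) 1, ∃ u ∈ Set.Icc (0 : ℝ) 1, η s = γ u := by
  by_contra! hmiss
  have hdisj : ∀ u ∈ Icc (0 : ℝ) 1, ∀ s ∈ Icc (0 : ℝ) 1, γ u ≠ η s :=
    fun u hu s hs h => hmiss s hs u hu h.symm
  obtain ⟨m, hm, hmle⟩ := exists_pos_forall_le_norm_sub isCompact_Icc isCompact_Icc hγ hη hdisj
  obtain ⟨n, ⟨hγstep, hθstep⟩, hn⟩ := (((hγ.eventually_forall_dist_nat_div_lt hm).and
    (hθ.eventually_forall_dist_nat_div_lt pi_pos)).and (eventually_gt_atTop 0)).exists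
  have hmem : ∀ k ≤ n, (k / n : ℝ) ∈ Icc 0 1 := fun k hk =>
    ⟨by positivity, div_le_one_of_le₀ (by exact_mod_cast hk) n.cast_nonneg⟩
  set p : ℕ → ℂ := fun k => γ (k / n)
  have hclosed : p n = p 0 := by simp [p, hn.ne', hloop]
  have hcont : ContinuousOn (fun s => windingAngle p n (η s)) (Icc 0 1) :=
    continuousOn_windingAngle hη fun s hs k hk =>
      (dist_eq_norm (p (k + 1)) (p k) ▸ hγstep k hk).trans_le (hmle _ (hmem k hk.le) s hs)
  have hconst : windingAngle p n (η 0) = windingAngle p n (η 1) :=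
    isPreconnected_Icc.eq_of_coe_angle_eq_zero hcont
      (fun s hs => by
        rw [coe_windingAngle fun k hk => hdisj _ (hmem k hk) s hs, sub_eq_zero]
        simp [hn.ne', hloop])
      (left_mem_Icc.2 zero_le_one) (right_mem_Icc.2 zero_le_one)
  have h0 : windingAngle p n (η 0) = θ 1 - θ 0 := by
    have := windingAngle_eq_sub_of_lift (φ := fun k => θ (k / n))
      (fun k hk => hη0 ▸ hdisj _ (hmem k hk) 0 (left_mem_Icc.2 zero_le_one))
      (fun k hk => hη0 ▸ hlift _ (hmem k hk))
      (fun k hk => by simpa [Real.dist_eq] using hθstep k hk)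
    simpa [p, hη0, hn.ne'] using this
  have h1 : windingAngle p n (η 1) = 0 :=
    windingAngle_eq_zero_of_norm_lt hclosed fun k hk => hη1 _ (hmem k hk)
  exact hwind (by linarith)

/-- A closed continuous loop with nonzero winding number around `w` (expressed via a continuous
lift `θ` of the argument of `γ - w` with `θ 1 ≠ θ 0`) separates `w` from infinity: any
continuous path starting at `w` and ending at a point of modulus larger than that of every
point of the loop must meet the image of the loop. -/
theorem stmt19 (γ : ℝ → ℂ) (w : ℂ)
    (hγ : ContinuousOn γ (Set.Icc 0 1)) (hloop : γ 0 = γ 1)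
    (hw : ∀ s ∈ Set.Icc (0 : ℝ) 1, γ s ≠ w)
    (θ : ℝ → ℝ) (hθ : ContinuousOn θ (Set.Icc 0 1))
    (hlift : ∀ s ∈ Set.Icc (0 : ℝ) 1,
      γ s - w = (‖γ s - w‖ : ℂ) * Complex.exp ((θ s : ℂ) * Complex.I))
    (hwind : θ 1 ≠ θ 0)
    (η : ℝ → ℂ) (hη : ContinuousOn η (Set.Icc 0 1)) (hη0 : η 0 = w)
    (hη1 : ∀ s ∈ Set.Icc (0 : ℝ) 1, ‖γ s‖ < ‖η 1‖) :
    ∃ s ∈ Set.Icc (0 : ℝ) 1, ∃ u ∈ Set.Icc (0 : ℝ) 1, η s = γ u :=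
  stmt19_general γ w hγ hloop θ hθ hlift hwind η hη hη0 hη1
end
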